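/- (Unbiasedness) For every baseline function b, every behavior policy μ ∈ Λ, every time t ∈ {0,…,T−1}, and every state s, the estimator G^b computed on a trajectory generated by μ from time t satisfies E[ G^b(τ^μ_{t:T−1}) | S_t = s ] = v_{π,t}(s). -/
import Mathlib


open Finset

namespace DOpt

variable {S A : Type}

/-- A time-indexed policy: for each time step and state, a probability distribution on actions. -/
def IsPolicy [Fintype A] (μ : ℕ → S → A → ℝ) : Prop :=
  ∀ t s, (∀ a, 0 ≤ μ t s a) ∧ ∑ a, μ t s a = 1

/-- A transition probability kernel on the finite state space. -/
def IsKernel [Fintype S] (p : S → A → S → ℝ) : Prop :=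
  ∀ s a, (∀ s', 0 ≤ p s a s') ∧ ∑ s', p s a s' = 1

/-- Action value `q_{π,t}(s,a)` computed with `n` remaining transitions after time `t`
(`n = T - 1 - t` in a horizon-`T` MDP). -/
noncomputable def qval [Fintype S] [Fintype A] (p : S → A → S → ℝ) (π : ℕ → S → A → ℝ)
    (r : S → A → ℝ) : ℕ → ℕ → S → A → ℝ
  | 0, _, s, a => r s a
  | n + 1, t, s, a =>
      r s a + ∑ s', p s a s' * ∑ a', π (t + 1) s' a' * qval p π r n (t + 1) s' a'

/-- `q_{π,t}(s,a)` in the horizon-`T` MDP. -/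
noncomputable def qf [Fintype S] [Fintype A] (T : ℕ) (p : S → A → S → ℝ)
    (π : ℕ → S → A → ℝ) (r : S → A → ℝ) (t : ℕ) (s : S) (a : A) : ℝ :=
  qval p π r (T - 1 - t) t s a

/-- `v_{π,t}(s) = Σ_a π_t(a|s) q_{π,t}(s,a)`. -/
noncomputable def vf [Fintype S] [Fintype A] (T : ℕ) (p : S → A → S → ℝ)
    (π : ℕ → S → A → ℝ) (r : S → A → ℝ) (t : ℕ) (s : S) : ℝ :=
  ∑ a, π t s a * qf T p π r t s a

/-- `ν_{π,t}(s,a) = Var_{s' ∼ p(·|s,a)}(v_{π,t+1}(s'))` for `t ≤ T-2`, and `0` at `t = T-1`. -/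
noncomputable def nuf [Fintype S] [Fintype A] (T : ℕ) (p : S → A → S → ℝ)
    (π : ℕ → S → A → ℝ) (r : S → A → ℝ) (t : ℕ) (s : S) (a : A) : ℝ :=
  if t + 2 ≤ T then
    (∑ s', p s a s' * (vf T p π r (t + 1) s') ^ 2) -
      (∑ s', p s a s' * vf T p π r (t + 1) s') ^ 2
  else 0

/-- Trajectories with `n` further transitions after the first action:
`(a_t, s_{t+1}, a_{t+1}, …, s_{t+n}, a_{t+n})`. -/
def Traj (S A : Type) : ℕ → Type
  | 0 => A
  | n + 1 => A × S × Traj S A n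

/-- Expectation, over trajectories generated by the behavior policy `μ` starting at time `t`
in state `s` with `n` further transitions, of a function `f` of the trajectory. -/
noncomputable def Exp [Fintype S] [Fintype A] (p : S → A → S → ℝ) (μ : ℕ → S → A → ℝ) :
    (n : ℕ) → ℕ → S → (Traj S A n → ℝ) → ℝ
  | 0, t, s, f => ∑ a, μ t s a * f a
  | n + 1, t, s, f =>
      ∑ a, μ t s a * ∑ s', p s a s' * Exp p μ n (t + 1) s' (fun τ => f (a, s', τ))

/-- Conditional variance of a function of the trajectory, given `S_t = s`. -/
noncomputable def Var [Fintype S] [Fintype A] (p : S → A → S → ℝ) (μ : ℕ → S → A → ℝ)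
    (n : ℕ) (t : ℕ) (s : S) (f : Traj S A n → ℝ) : ℝ :=
  Exp p μ n t s (fun τ => (f τ) ^ 2) - (Exp p μ n t s f) ^ 2

/-- `b̄_t(s) = Σ_a π_t(a|s) b_t(s,a)`. -/
noncomputable def bbar [Fintype A] (π : ℕ → S → A → ℝ) (b : ℕ → S → A → ℝ)
    (t : ℕ) (s : S) : ℝ :=
  ∑ a, π t s a * b t s a

/-- The per-decision importance-sampling estimator `G^b` with baseline `b`, target policy `π`
and behavior policy `μ`, as a function of the trajectory from time `t` (with `n` further
transitions, `n = T - 1 - t`). -/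
noncomputable def Gest [Fintype S] [Fintype A] (π μ : ℕ → S → A → ℝ) (r : S → A → ℝ)
    (b : ℕ → S → A → ℝ) : (n : ℕ) → ℕ → S → Traj S A n → ℝ
  | 0, t, s, a => (π t s a / μ t s a) * (r s a - b t s a) + bbar π b t s
  | n + 1, t, s, (a, s', τ) =>
      (π t s a / μ t s a) * (r s a + Gest π μ r b n (t + 1) s' τ - b t s a) + bbar π b t s

/-- Normalization of a weight vector into a probability distribution; the uniform distribution
when the total weight vanishes. -/
noncomputable def normPol [Fintype A] (w : A → ℝ) (a : A) : ℝ :=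
  if (∑ a', w a') = 0 then ((Fintype.card A : ℝ))⁻¹ else w a / ∑ a', w a'

/-- `u_{π,t}(s,a)` (with baseline `b`), defined backwards in time together with the optimal
behavior policy `μ*`; the first argument is the number `n = T - 1 - t` of remaining
transitions after time `t`. -/
noncomputable def uAux [Fintype S] [Fintype A] (T : ℕ) (p : S → A → S → ℝ)
    (π : ℕ → S → A → ℝ) (r : S → A → ℝ) (b : ℕ → S → A → ℝ) :
    ℕ → ℕ → S → A → ℝ
  | 0, t, s, a => (qf T p π r t s a - b t s a) ^ 2
  | n + 1, t, s, a =>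
      (qf T p π r t s a - b t s a) ^ 2 + nuf T p π r t s a +
        ∑ s', p s a s' *
          Var p
            (fun t' s₁ a₁ => normPol (fun a₂ =>
              π t' s₁ a₂ * Real.sqrt (uAux T p π r b (n - (t' - (t + 1))) t' s₁ a₂)) a₁)
            n (t + 1) s'
            (Gest π
              (fun t' s₁ a₁ => normPol (fun a₂ =>
                π t' s₁ a₂ * Real.sqrt (uAux T p π r b (n - (t' - (t + 1))) t' s₁ a₂)) a₁)
              r b n (t + 1) s')
  termination_by n => n
  decreasing_by all_goals omega

/-- `u_{π,t}(s,a)` in the horizon-`T` MDP, with baseline `b`. -/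
noncomputable def uf [Fintype S] [Fintype A] (T : ℕ) (p : S → A → S → ℝ)
    (π : ℕ → S → A → ℝ) (r : S → A → ℝ) (b : ℕ → S → A → ℝ) (t : ℕ) (s : S) (a : A) : ℝ :=
  uAux T p π r b (T - 1 - t) t s a

/-- The optimal behavior policy `μ*_t(a|s) ∝ π_t(a|s) √(u_{π,t}(s,a))` tailored to the
baseline `b` (uniform when all the weights vanish). -/
noncomputable def mustar [Fintype S] [Fintype A] (T : ℕ) (p : S → A → S → ℝ)
    (π : ℕ → S → A → ℝ) (r : S → A → ℝ) (b : ℕ → S → A → ℝ) (t : ℕ) (s : S) (a : A) : ℝ :=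
  normPol (fun a' => π t s a' * Real.sqrt (uf T p π r b t s a')) a

/-- Conditional expectation `E[G^b(τ^μ_{t:T-1}) | S_t = s]`. -/
noncomputable def ExpG [Fintype S] [Fintype A] (T : ℕ) (p : S → A → S → ℝ)
    (π μ : ℕ → S → A → ℝ) (r : S → A → ℝ) (b : ℕ → S → A → ℝ) (t : ℕ) (s : S) : ℝ :=
  Exp p μ (T - 1 - t) t s (Gest π μ r b (T - 1 - t) t s)

/-- Conditional variance `Var(G^b(τ^μ_{t:T-1}) | S_t = s)`. -/
noncomputable def VarG [Fintype S] [Fintype A] (T : ℕ) (p : S → A → S → ℝ)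
    (π μ : ℕ → S → A → ℝ) (r : S → A → ℝ) (b : ℕ → S → A → ℝ) (t : ℕ) (s : S) : ℝ :=
  Var p μ (T - 1 - t) t s (Gest π μ r b (T - 1 - t) t s)

/-- Membership in the enlarged policy-search space
`Λ = {μ : ∀ t,s,a, μ_t(a|s) = 0 → π_t(a|s)·u_{π,t}(s,a) = 0}`. -/
def inLambda [Fintype S] [Fintype A] (T : ℕ) (p : S → A → S → ℝ)
    (π : ℕ → S → A → ℝ) (r : S → A → ℝ) (b : ℕ → S → A → ℝ) (μ : ℕ → S → A → ℝ) : Prop :=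
  ∀ t s a, t < T → μ t s a = 0 → π t s a * uf T p π r b t s a = 0


/-- The optimal baseline `b*_t(s,a) = q_{π,t}(s,a)`. -/
noncomputable def bstar [Fintype S] [Fintype A] (T : ℕ) (p : S → A → S → ℝ)
    (π : ℕ → S → A → ℝ) (r : S → A → ℝ) : ℕ → S → A → ℝ :=
  fun t s a => qf T p π r t s a

/-- The zero baseline: with it, `Gest` is the plain PDIS estimator `G^{PDIS}`. -/
def zerob : ℕ → S → A → ℝ := fun _ _ _ => 0

/-- Cauchy–Schwarz for probability weights: `(E f)² ≤ E f²`. -/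
lemma sq_sum_le {ι : Type} [Fintype ι] (w f : ι → ℝ) (hw : ∀ i, 0 ≤ w i)
    (h1 : ∑ i, w i = 1) : (∑ i, w i * f i) ^ 2 ≤ ∑ i, w i * f i ^ 2 := by
  have h := sum_mul_sq_le_sq_mul_sq Finset.univ (fun i => Real.sqrt (w i))
    (fun i => Real.sqrt (w i) * f i)
  have e1 : ∀ i : ι, Real.sqrt (w i) * (Real.sqrt (w i) * f i) = w i * f i := by
    intro i; rw [← mul_assoc, Real.mul_self_sqrt (hw i)]
  have e2 : ∀ i : ι, (Real.sqrt (w i)) ^ 2 = w i := fun i => Real.sq_sqrt (hw i)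
  have e3 : ∀ i : ι, (Real.sqrt (w i) * f i) ^ 2 = w i * f i ^ 2 := by
    intro i; rw [mul_pow, e2]
  simp only [e1, e2, e3] at h
  calc (∑ i, w i * f i) ^ 2 ≤ (∑ i, w i) * ∑ i, w i * f i ^ 2 := h
    _ = ∑ i, w i * f i ^ 2 := by rw [h1, one_mul]

/-- Jensen: `(Exp f)² ≤ Exp f²` for expectations under a policy and a kernel. -/
lemma exp_sq_le [Fintype S] [Fintype A] (p : S → A → S → ℝ) (μ : ℕ → S → A → ℝ)
    (hp : IsKernel p) (hμ : IsPolicy μ) :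
    ∀ (n t : ℕ) (s : S) (f : Traj S A n → ℝ),
      (Exp p μ n t s f) ^ 2 ≤ Exp p μ n t s (fun τ => f τ ^ 2) := by
  intro n
  induction n with
  | zero =>
    intro t s f
    exact sq_sum_le (μ t s) f (hμ t s).1 (hμ t s).2
  | succ n ih =>
    intro t s f
    simp only [Exp]
    calc (∑ a, μ t s a * ∑ s', p s a s' * Exp p μ n (t + 1) s' fun τ => f (a, s', τ)) ^ 2
        ≤ ∑ a, μ t s a * (∑ s', p s a s' * Exp p μ n (t + 1) s' fun τ => f (a, s', τ)) ^ 2 :=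
          sq_sum_le (μ t s) _ (hμ t s).1 (hμ t s).2
      _ ≤ ∑ a, μ t s a * ∑ s', p s a s' *
            (Exp p μ n (t + 1) s' fun τ => f (a, s', τ)) ^ 2 := by
          apply Finset.sum_le_sum; intro a _
          exact mul_le_mul_of_nonneg_left
            (sq_sum_le (p s a) _ (hp s a).1 (hp s a).2) ((hμ t s).1 a)
      _ ≤ ∑ a, μ t s a * ∑ s', p s a s' *
            Exp p μ n (t + 1) s' (fun τ => f (a, s', τ) ^ 2) := by
          apply Finset.sum_le_sum; intro a _
          apply mul_le_mul_of_nonneg_left _ ((hμ t s).1 a)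
          apply Finset.sum_le_sum; intro s' _
          exact mul_le_mul_of_nonneg_left (ih (t + 1) s' _) ((hp s a).1 s')

lemma var_nonneg' [Fintype S] [Fintype A] (p : S → A → S → ℝ) (μ : ℕ → S → A → ℝ)
    (hp : IsKernel p) (hμ : IsPolicy μ) (n t : ℕ) (s : S) (f : Traj S A n → ℝ) :
    0 ≤ Var p μ n t s f :=
  sub_nonneg.mpr (exp_sq_le p μ hp hμ n t s f)

lemma normPol_isPolicy [Fintype A] [Nonempty A] (w : ℕ → S → A → ℝ)
    (hw : ∀ t s a, 0 ≤ w t s a) : IsPolicy (fun t s a => normPol (w t s) a) := by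
  intro t s
  by_cases h : (∑ a, w t s a) = 0
  · constructor
    · intro a; simp only [normPol, h, if_pos]
      positivity
    · simp only [normPol, h, if_pos, Finset.sum_const, Finset.card_univ, nsmul_eq_mul]
      rw [mul_inv_cancel₀]
      exact_mod_cast Fintype.card_ne_zero
  · have hpos : 0 < ∑ a, w t s a :=
      lt_of_le_of_ne (Finset.sum_nonneg fun a _ => hw t s a) (Ne.symm h)
    constructor
    · intro a; simp only [normPol, h, if_neg, if_false]
      exact div_nonneg (hw t s a) hpos.le
    · simp only [normPol, h, if_neg, if_false]
      rw [← Finset.sum_div, div_self h]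

lemma nuf_nonneg [Fintype S] [Fintype A] (T : ℕ) (p : S → A → S → ℝ)
    (π : ℕ → S → A → ℝ) (r : S → A → ℝ) (hp : IsKernel p) (t : ℕ) (s : S) (a : A) :
    0 ≤ nuf T p π r t s a := by
  unfold nuf
  split
  · exact sub_nonneg.mpr (sq_sum_le (p s a) _ (hp s a).1 (hp s a).2)
  · exact le_refl 0

lemma qb_sq_le_uAux [Fintype S] [Fintype A] [Nonempty A] (T : ℕ) (p : S → A → S → ℝ)
    (π : ℕ → S → A → ℝ) (r : S → A → ℝ) (b : ℕ → S → A → ℝ)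
    (hp : IsKernel p) (hπ : IsPolicy π) (n t : ℕ) (s : S) (a : A) :
    (qf T p π r t s a - b t s a) ^ 2 ≤ uAux T p π r b n t s a := by
  cases n with
  | zero => rw [uAux]
  | succ n =>
    rw [uAux]
    have h1 : 0 ≤ nuf T p π r t s a := nuf_nonneg T p π r hp t s a
    have h2 : 0 ≤ ∑ s', p s a s' *
        Var p
          (fun t' s₁ a₁ => normPol (fun a₂ =>
            π t' s₁ a₂ * Real.sqrt (uAux T p π r b (n - (t' - (t + 1))) t' s₁ a₂)) a₁)
          n (t + 1) s'
          (Gest π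
            (fun t' s₁ a₁ => normPol (fun a₂ =>
              π t' s₁ a₂ * Real.sqrt (uAux T p π r b (n - (t' - (t + 1))) t' s₁ a₂)) a₁)
            r b n (t + 1) s') := by
      apply Finset.sum_nonneg; intro s' _
      apply mul_nonneg ((hp s a).1 s')
      apply var_nonneg' _ _ hp
      exact normPol_isPolicy _ fun t' s₁ a₂ =>
        mul_nonneg ((hπ t' s₁).1 a₂) (Real.sqrt_nonneg _)
    linarith

/-- Expectation of an affine function of the estimand. -/
lemma exp_affine [Fintype S] [Fintype A] (p : S → A → S → ℝ) (μ : ℕ → S → A → ℝ)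
    (hp : IsKernel p) (hμ : IsPolicy μ) (c d : ℝ) :
    ∀ (n t : ℕ) (s : S) (f : Traj S A n → ℝ),
      Exp p μ n t s (fun τ => c * f τ + d) = c * Exp p μ n t s f + d := by
  intro n
  induction n with
  | zero =>
    intro t s f
    simp only [Exp]
    rw [show (∑ a, μ t s a * (c * f a + d))
        = c * (∑ a, μ t s a * f a) + d * ∑ a, μ t s a by
      rw [Finset.mul_sum, Finset.mul_sum, ← Finset.sum_add_distrib]
      exact Finset.sum_congr rfl fun a _ => by ring]
    rw [(hμ t s).2]; ring
  | succ n ih =>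
    intro t s f
    simp only [Exp]
    have step : ∀ a, (∑ s', p s a s' *
        Exp p μ n (t + 1) s' fun τ => c * f (a, s', τ) + d)
        = c * (∑ s', p s a s' * Exp p μ n (t + 1) s' fun τ => f (a, s', τ)) + d := by
      intro a
      have : ∀ s', Exp p μ n (t + 1) s' (fun τ => c * f (a, s', τ) + d)
          = c * Exp p μ n (t + 1) s' (fun τ => f (a, s', τ)) + d :=
        fun s' => ih (t + 1) s' _
      simp only [this]
      rw [show (∑ s', p s a s' * (c * Exp p μ n (t+1) s' (fun τ => f (a, s', τ)) + d))
          = c * (∑ s', p s a s' * Exp p μ n (t+1) s' (fun τ => f (a, s', τ)))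
            + d * ∑ s', p s a s' by
        rw [Finset.mul_sum, Finset.mul_sum, ← Finset.sum_add_distrib]
        exact Finset.sum_congr rfl fun s' _ => by ring]
      rw [(hp s a).2]; ring
    simp only [step]
    rw [show (∑ a, μ t s a * (c * (∑ s', p s a s' *
          Exp p μ n (t+1) s' fun τ => f (a, s', τ)) + d))
        = c * (∑ a, μ t s a * ∑ s', p s a s' *
            Exp p μ n (t+1) s' (fun τ => f (a, s', τ))) + d * ∑ a, μ t s a by
      rw [Finset.mul_sum, Finset.mul_sum, ← Finset.sum_add_distrib]
      exact Finset.sum_congr rfl fun a _ => by ring]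
    rw [(hμ t s).2]; ring

/-- The importance-weight cancellation, valid on `Λ`. -/
lemma mu_cancel [Fintype S] [Fintype A] [Nonempty A] (T : ℕ) (p : S → A → S → ℝ)
    (π μ : ℕ → S → A → ℝ) (r : S → A → ℝ) (b : ℕ → S → A → ℝ)
    (hp : IsKernel p) (hπ : IsPolicy π) (hΛ : inLambda T p π r b μ)
    (n t : ℕ) (h : t + n + 1 = T) (s : S) (a : A) :
    μ t s a * ((π t s a / μ t s a) * (qval p π r n t s a - b t s a))
      = π t s a * (qval p π r n t s a - b t s a) := by
  have hqf : qf T p π r t s a = qval p π r n t s a := by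
    unfold qf; rw [show T - 1 - t = n from by omega]
  by_cases hμ0 : μ t s a = 0
  · have h2 := hΛ t s a (by omega) hμ0
    have hu : uf T p π r b t s a = uAux T p π r b n t s a := by
      unfold uf; rw [show T - 1 - t = n from by omega]
    rcases mul_eq_zero.mp h2 with hπ0 | hu0
    · simp [hμ0, hπ0]
    · rw [hu] at hu0
      have hle : (qval p π r n t s a - b t s a) ^ 2 ≤ 0 := by
        rw [← hqf, ← hu0]
        exact qb_sq_le_uAux T p π r b hp hπ n t s a
      have : qval p π r n t s a - b t s a = 0 :=
        pow_eq_zero_iff (by norm_num) |>.mp (le_antisymm hle (sq_nonneg _))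
      simp [hμ0, this]
  · field_simp

/-- Main induction: unbiasedness with explicit remaining-transitions counter. -/
lemma expG_eq [Fintype S] [Fintype A] [Nonempty A] (T : ℕ) (p : S → A → S → ℝ)
    (π μ : ℕ → S → A → ℝ) (r : S → A → ℝ) (b : ℕ → S → A → ℝ)
    (hp : IsKernel p) (hπ : IsPolicy π) (hμ : IsPolicy μ) (hΛ : inLambda T p π r b μ) :
    ∀ (n t : ℕ) (s : S), t + n + 1 = T →
      Exp p μ n t s (Gest π μ r b n t s)
        = ∑ a, π t s a * qval p π r n t s a := by
  intro n
  induction n with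
  | zero =>
    intro t s hts
    simp only [Exp, Gest, qval]
    have key : ∀ a, μ t s a * ((π t s a / μ t s a) * (r s a - b t s a) + bbar π b t s)
        = π t s a * (r s a - b t s a) + μ t s a * bbar π b t s := by
      intro a
      rw [mul_add]
      congr 1
      exact mu_cancel T p π μ r b hp hπ hΛ 0 t hts s a
    simp only [key]
    rw [Finset.sum_add_distrib, ← Finset.sum_mul, (hμ t s).2, one_mul, bbar,
      ← Finset.sum_add_distrib]
    exact Finset.sum_congr rfl fun a _ => by ring
  | succ n ih =>
    intro t s hts
    simp only [Exp, Gest]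
    have inner : ∀ a s', Exp p μ n (t + 1) s'
        (fun τ => (π t s a / μ t s a) *
          (r s a + Gest π μ r b n (t + 1) s' τ - b t s a) + bbar π b t s)
        = (π t s a / μ t s a) *
            (r s a + (∑ a', π (t + 1) s' a' * qval p π r n (t + 1) s' a') - b t s a)
          + bbar π b t s := by
      intro a s'
      have e : ∀ τ : Traj S A n,
          (π t s a / μ t s a) * (r s a + Gest π μ r b n (t + 1) s' τ - b t s a)
            + bbar π b t s
          = (π t s a / μ t s a) * Gest π μ r b n (t + 1) s' τ
            + ((π t s a / μ t s a) * (r s a - b t s a) + bbar π b t s) := by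
        intro τ; ring
      simp only [e]
      rw [exp_affine p μ hp hμ _ _ n (t + 1) s' (Gest π μ r b n (t + 1) s'),
        ih (t + 1) s' (by omega)]
      ring
    simp only [inner]
    have mid : ∀ a, (∑ s', p s a s' *
        ((π t s a / μ t s a) *
          (r s a + (∑ a', π (t + 1) s' a' * qval p π r n (t + 1) s' a') - b t s a)
          + bbar π b t s))
        = (π t s a / μ t s a) * (qval p π r (n + 1) t s a - b t s a) + bbar π b t s := by
      intro a
      have expand : ∀ s', p s a s' *
          ((π t s a / μ t s a) *
            (r s a + (∑ a', π (t + 1) s' a' * qval p π r n (t + 1) s' a') - b t s a)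
            + bbar π b t s)
          = (π t s a / μ t s a) *
              (p s a s' * (r s a - b t s a)
               + p s a s' * (∑ a', π (t + 1) s' a' * qval p π r n (t + 1) s' a'))
            + p s a s' * bbar π b t s := by
        intro s'; ring
      simp only [expand]
      rw [Finset.sum_add_distrib, ← Finset.mul_sum, Finset.sum_add_distrib,
        ← Finset.sum_mul, (hp s a).2, ← Finset.sum_mul, (hp s a).2]
      rw [qval]
      ring
    simp only [mid]
    have key : ∀ a, μ t s a *
        ((π t s a / μ t s a) * (qval p π r (n + 1) t s a - b t s a) + bbar π b t s)
        = π t s a * (qval p π r (n + 1) t s a - b t s a) + μ t s a * bbar π b t s := by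
      intro a
      rw [mul_add]
      congr 1
      exact mu_cancel T p π μ r b hp hπ hΛ (n + 1) t hts s a
    simp only [key]
    rw [Finset.sum_add_distrib, ← Finset.sum_mul, (hμ t s).2, one_mul, bbar,
      ← Finset.sum_add_distrib]
    exact Finset.sum_congr rfl fun a _ => by ring

/-- Unbiasedness: for every baseline `b`, every behavior policy `μ ∈ Λ`,
every time `t ∈ {0,…,T−1}` and every state `s`,
`E[ G^b(τ^μ_{t:T−1}) | S_t = s ] = v_{π,t}(s)`. -/
theorem unbiasedness {S A : Type} [Fintype S] [Fintype A] [Nonempty A]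
    (T : ℕ) (hT : 1 ≤ T)
    (p : S → A → S → ℝ) (hp : IsKernel p)
    (r : S → A → ℝ)
    (π : ℕ → S → A → ℝ) (hπ : IsPolicy π)
    (b : ℕ → S → A → ℝ)
    (μ : ℕ → S → A → ℝ) (hμ : IsPolicy μ) (hΛ : inLambda T p π r b μ)
    (t : ℕ) (ht : t < T) (s : S) :
    ExpG T p π μ r b t s = vf T p π r t s := by
  unfold ExpG vf qf
  exact expG_eq T p π μ r b hp hπ hμ hΛ (T - 1 - t) t s (by omega)

end DOpt
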